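/- arXiv:2205.12418 — 2 statements merged into one kernel-verified Lean document; each statement's English description precedes it below -/
import Mathlib

section
/- In a finite-horizon tabular MDP with minimal positive suboptimality gap Δ_min, for any sequence of deterministic policies π₁,...,π_k there exists a sequence of deterministic optimal policies π₁*,...,π_k* such that for all h, s_h, a_h: ∑_{k̃=1}^k d^{π_{k̃}}(s_h,a_h) ≥ ∑_{k̃=1}^k d^{π*_{k̃}}(s_h,a_h) − (1/Δ_min)·∑_{k̃=1}^k (V₁*(s₁) − V₁^{π_{k̃}}(s₁)). -/
open Finset MeasureTheory Classical
open scoped Classical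

/-- A finite-horizon tabular MDP with horizon `H`, fixed initial state `s0`,
time-dependent transition kernel `P` and deterministic rewards `r` in `[0,1]`.
Steps are indexed `1, …, H` (so value functions live on `1, …, H+1`). -/
structure TabMDP (S A : Type) [Fintype S] [Fintype A] where
  H : ℕ
  s0 : S
  P : ℕ → S → A → S → ℝ
  r : ℕ → S → A → ℝ
  P_nonneg : ∀ h s a s', 0 ≤ P h s a s'
  P_sum_one : ∀ h s a, ∑ s', P h s a s' = 1
  r_nonneg : ∀ h s a, 0 ≤ r h s a
  r_le_one : ∀ h s a, r h s a ≤ 1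

namespace TabMDP

variable {S A : Type} [Fintype S] [Nonempty S] [Fintype A] [Nonempty A]

/-- Value function of a deterministic policy, computed with `n` remaining steps starting
at step `h`: `Vfuel M π n h s = E_π[∑_{h'=h}^{h+n-1} r(s_{h'},a_{h'}) | s_h = s]`. -/
noncomputable def Vfuel (M : TabMDP S A) (π : ℕ → S → A) : ℕ → ℕ → S → ℝ
  | 0, _, _ => 0
  | n + 1, h, s =>
      M.r h s (π h s) + ∑ s', M.P h s (π h s) s' * Vfuel M π n (h + 1) s'

/-- `V M π h s = V^π_h(s)`, for `1 ≤ h ≤ H+1`. -/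
noncomputable def V (M : TabMDP S A) (π : ℕ → S → A) (h : ℕ) (s : S) : ℝ :=
  Vfuel M π (M.H + 1 - h) h s

/-- Q-function of a deterministic policy. -/
noncomputable def Q (M : TabMDP S A) (π : ℕ → S → A) (h : ℕ) (s : S) (a : A) : ℝ :=
  M.r h s a + ∑ s', M.P h s a s' * V M π (h + 1) s'

/-- Optimal value function with `n` remaining steps. -/
noncomputable def VstarFuel (M : TabMDP S A) : ℕ → ℕ → S → ℝ
  | 0, _, _ => 0
  | n + 1, h, s =>
      ⨆ a : A, (M.r h s a + ∑ s', M.P h s a s' * VstarFuel M n (h + 1) s')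

/-- `Vstar M h s = V^*_h(s)`. -/
noncomputable def Vstar (M : TabMDP S A) (h : ℕ) (s : S) : ℝ :=
  VstarFuel M (M.H + 1 - h) h s

/-- Optimal Q-function `Q^*_h(s,a)`. -/
noncomputable def Qstar (M : TabMDP S A) (h : ℕ) (s : S) (a : A) : ℝ :=
  M.r h s a + ∑ s', M.P h s a s' * Vstar M (h + 1) s'

/-- Suboptimality gap `Δ_h(s,a) = V^*_h(s) - Q^*_h(s,a)`. -/
noncomputable def gap (M : TabMDP S A) (h : ℕ) (s : S) (a : A) : ℝ :=
  Vstar M h s - Qstar M h s a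

/-- A deterministic policy is optimal if it achieves the optimal value at the initial state. -/
def IsOptimal (M : TabMDP S A) (π : ℕ → S → A) : Prop :=
  V M π 1 M.s0 = Vstar M 1 M.s0

/-- State occupancy `d^π(s_h) = Pr(S_h = s_h | S_1 = s0, π)`, for `1 ≤ h ≤ H`. -/
noncomputable def stateOcc (M : TabMDP S A) (π : ℕ → S → A) : ℕ → S → ℝ
  | 0 => fun _ => 0
  | 1 => fun s => if s = M.s0 then 1 else 0
  | h + 2 => fun s' => ∑ s, stateOcc M π (h + 1) s * M.P (h + 1) s (π (h + 1) s) s'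

/-- State-action occupancy `d^π(s_h, a_h)` of a deterministic policy. -/
noncomputable def occ (M : TabMDP S A) (π : ℕ → S → A) (h : ℕ) (s : S) (a : A) : ℝ :=
  if π h s = a then stateOcc M π h s else 0

/-- Expected sum of a per-step function along trajectories of `π` started at `(h,s)` with
`n` remaining steps: `pathSum M π g n h s = E_π[∑_{h'=h}^{h+n-1} g(h', s_{h'}, a_{h'}) | s_h = s]`. -/
noncomputable def pathSum (M : TabMDP S A) (π : ℕ → S → A) (g : ℕ → S → A → ℝ) :
    ℕ → ℕ → S → ℝ
  | 0, _, _ => 0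
  | n + 1, h, s =>
      g h s (π h s) + ∑ s', M.P h s (π h s) s' * pathSum M π g n (h + 1) s'

/-- `E_{π_k}[∑_{h'} 𝟙[Ẽ_{h'}] g(h', s_{h'})]` where `Ẽ_{h'}` is the event that step `h'` is the
first step along the trajectory (generated by `πk`) at which `πk(s_{h'}) ≠ π(s_{h'})`;
computed by the recursion that stops and pays `g h s` at the first disagreeing state. -/
noncomputable def firstDisagreeExp (M : TabMDP S A) (πk π : ℕ → S → A) (g : ℕ → S → ℝ) :
    ℕ → ℕ → S → ℝ
  | 0, _, _ => 0
  | n + 1, h, s =>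
      if πk h s ≠ π h s then g h s
      else ∑ s', M.P h s (πk h s) s' * firstDisagreeExp M πk π g n (h + 1) s'

/-- Probability, under trajectories of `πk` started at `s0` at step 1, that `πk` disagrees
with `π` at some visited state within steps `1, …, H`. -/
noncomputable def disagreeProb (M : TabMDP S A) (πk π : ℕ → S → A) : ℝ :=
  firstDisagreeExp M πk π (fun _ _ => 1) M.H 1 M.s0

/-! ### Stochastic policies -/

/-- A stochastic policy `πs h s a` = probability of taking `a` at state `s`, step `h`. -/
def IsStochasticPolicy (πs : ℕ → S → A → ℝ) : Prop :=
  ∀ h s, (∀ a, 0 ≤ πs h s a) ∧ ∑ a, πs h s a = 1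

/-- State occupancy of a stochastic policy. -/
noncomputable def stateOccS (M : TabMDP S A) (πs : ℕ → S → A → ℝ) : ℕ → S → ℝ
  | 0 => fun _ => 0
  | 1 => fun s => if s = M.s0 then 1 else 0
  | h + 2 => fun s' =>
      ∑ s, ∑ a, stateOccS M πs (h + 1) s * πs (h + 1) s a * M.P (h + 1) s a s'

/-- State-action occupancy of a stochastic policy. -/
noncomputable def occS (M : TabMDP S A) (πs : ℕ → S → A → ℝ) (h : ℕ) (s : S) (a : A) : ℝ :=
  stateOccS M πs h s * πs h s a

/-- Value function of a stochastic policy (with fuel). -/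
noncomputable def VSfuel (M : TabMDP S A) (πs : ℕ → S → A → ℝ) : ℕ → ℕ → S → ℝ
  | 0, _, _ => 0
  | n + 1, h, s =>
      ∑ a, πs h s a * (M.r h s a + ∑ s', M.P h s a s' * VSfuel M πs n (h + 1) s')

/-- Value of a stochastic policy. -/
noncomputable def VS (M : TabMDP S A) (πs : ℕ → S → A → ℝ) (h : ℕ) (s : S) : ℝ :=
  VSfuel M πs (M.H + 1 - h) h s

/-- A stochastic policy is optimal if it achieves the optimal value at the initial state. -/
def IsOptimalS (M : TabMDP S A) (πs : ℕ → S → A → ℝ) : Prop :=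
  VS M πs 1 M.s0 = Vstar M 1 M.s0

/-- `d^*_{h,min}(s_h,a_h)`: the minimal positive occupancy of `(s_h,a_h)` over deterministic
optimal policies that reach `(s_h, a_h)`. -/
noncomputable def dhmin (M : TabMDP S A) (h : ℕ) (s : S) (a : A) : ℝ :=
  sInf {x : ℝ | ∃ π : ℕ → S → A, IsOptimal M π ∧ occ M π h s a = x ∧ 0 < x}

/-- `Z_{h,div}`: state-action pairs whose state is reachable by some deterministic optimal
policy but unreachable by some other deterministic optimal policy. -/
def Zdiv (M : TabMDP S A) (h : ℕ) : Set (S × A) :=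
  {p | ∃ π π' : ℕ → S → A, IsOptimal M π ∧ IsOptimal M π' ∧
        0 < stateOcc M π h p.1 ∧ stateOcc M π' h p.1 = 0}

/-! ### Pessimistic value iteration -/

/-- PVI pessimistic value estimate (with fuel), given the empirical model `Phat` and
bonus `b`:  `V̂_h(s) = max_a max{r(s,a) + P̂_h V̂_{h+1}(s,a) - b_h(s,a), 0}`. -/
noncomputable def VhatFuel (M : TabMDP S A) (Phat : ℕ → S → A → S → ℝ)
    (b : ℕ → S → A → ℝ) : ℕ → ℕ → S → ℝ
  | 0, _, _ => 0
  | n + 1, h, s =>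
      ⨆ a : A,
        max (M.r h s a + (∑ s', Phat h s a s' * VhatFuel M Phat b n (h + 1) s') - b h s a) 0

/-- `V̂_h(s)`, the PVI pessimistic value estimate. -/
noncomputable def Vhat (M : TabMDP S A) (Phat : ℕ → S → A → S → ℝ)
    (b : ℕ → S → A → ℝ) (h : ℕ) (s : S) : ℝ :=
  VhatFuel M Phat b (M.H + 1 - h) h s

/-- `Q̂_h(s,a) = max{r(s,a) + P̂_h V̂_{h+1}(s,a) - b_h(s,a), 0}`, the PVI pessimistic
Q estimate. -/
noncomputable def Qhat (M : TabMDP S A) (Phat : ℕ → S → A → S → ℝ)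
    (b : ℕ → S → A → ℝ) (h : ℕ) (s : S) (a : A) : ℝ :=
  max (M.r h s a + (∑ s', Phat h s a s' * Vhat M Phat b (h + 1) s') - b h s a) 0

/-- PVI surplus `E_h(s,a) := r(s,a) + P_h V̂_{h+1}(s,a) - Q̂_h(s,a)`. -/
noncomputable def surplus (M : TabMDP S A) (Phat : ℕ → S → A → S → ℝ)
    (b : ℕ → S → A → ℝ) (h : ℕ) (s : S) (a : A) : ℝ :=
  M.r h s a + (∑ s', M.P h s a s' * Vhat M Phat b (h + 1) s') - Qhat M Phat b h s a

/-- Value of a deterministic policy for the reward `r - Ebar` (clipped-surplus value `V̈`),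
with fuel. -/
noncomputable def VclipFuel (M : TabMDP S A) (π : ℕ → S → A) (Ebar : ℕ → S → A → ℝ) :
    ℕ → ℕ → S → ℝ
  | 0, _, _ => 0
  | n + 1, h, s =>
      (M.r h s (π h s) - Ebar h s (π h s)) +
        ∑ s', M.P h s (π h s) s' * VclipFuel M π Ebar n (h + 1) s'

/-- `V̈^π_h(s)`: value of `π` when the reward is reduced by `Ebar`. -/
noncomputable def Vclip (M : TabMDP S A) (π : ℕ → S → A) (Ebar : ℕ → S → A → ℝ)
    (h : ℕ) (s : S) : ℝ :=
  VclipFuel M π Ebar (M.H + 1 - h) h s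

end TabMDP

/-- `Clip[x | ε] := x · 𝟙[x ≥ ε]`. -/
noncomputable def clip (x ε : ℝ) : ℝ := if ε ≤ x then x else 0

/-!
Let `π*` follow `π` wherever `π` plays an optimal action and play a fixed optimal action
elsewhere; all gaps of `π*` vanish, so it is optimal. By the performance difference lemma the
regret of `π` is `∑_h E_π[Δ_h(s_h, π(s_h))]`, and every state where `π` and `π*` disagree has gap
at least `Δmin`, so the probability under `π` of meeting a disagreement up to step `h` is at most
regret / `Δmin`. The mass of `d^{π*}_h` not covered by `d^π_h` can only be created at such
states, which bounds `d^{π*}_h(s, a) - d^π_h(s, a)` by that probability.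
-/

namespace TabMDP

variable {S A : Type} [Fintype S] [Fintype A] (M : TabMDP S A)

lemma stateOcc_succ (π : ℕ → S → A) {h : ℕ} (hh : 1 ≤ h) (s' : S) :
    M.stateOcc π (h + 1) s' = ∑ s, M.stateOcc π h s * M.P h s (π h s) s' := by
  obtain ⟨m, rfl⟩ := Nat.exists_eq_add_of_le' hh
  rfl

lemma stateOcc_nonneg (π : ℕ → S → A) (h : ℕ) (s : S) : 0 ≤ M.stateOcc π h s := by
  fun_induction stateOcc M π h generalizing s with
  | case1 => exact le_rfl
  | case2 => dsimp only; split_ifs <;> norm_num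
  | case3 h ih => exact sum_nonneg fun s _ => mul_nonneg (ih s) (M.P_nonneg _ _ _ _)

lemma occ_nonneg (π : ℕ → S → A) (h : ℕ) (s : S) (a : A) : 0 ≤ M.occ π h s a := by
  unfold occ
  split_ifs
  exacts [M.stateOcc_nonneg π h s, le_rfl]

lemma V_eq_r_add_sum (π : ℕ → S → A) {h : ℕ} (hh : h ≤ M.H) (s : S) :
    M.V π h s = M.r h s (π h s) + ∑ s', M.P h s (π h s) s' * M.V π (h + 1) s' := by
  unfold V
  rw [show M.H + 1 - h = M.H - h + 1 by omega, show M.H + 1 - (h + 1) = M.H - h by omega]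
  rfl

lemma Vstar_eq_iSup_Qstar {h : ℕ} (hh : h ≤ M.H) (s : S) :
    M.Vstar h s = ⨆ a, M.Qstar h s a := by
  unfold Qstar Vstar
  rw [show M.H + 1 - h = M.H - h + 1 by omega, show M.H + 1 - (h + 1) = M.H - h by omega]
  rfl

lemma gap_nonneg {h : ℕ} (hh : h ≤ M.H) (s : S) (a : A) : 0 ≤ M.gap h s a := by
  rw [gap, sub_nonneg, M.Vstar_eq_iSup_Qstar hh]
  exact le_ciSup (Set.finite_range _).bddAbove a

lemma Vstar_sub_V_eq_gap_add_sum (π : ℕ → S → A) {h : ℕ} (hh : h ≤ M.H) (s : S) :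
    M.Vstar h s - M.V π h s = M.gap h s (π h s) +
      ∑ s', M.P h s (π h s) s' * (M.Vstar (h + 1) s' - M.V π (h + 1) s') := by
  simp only [gap, Qstar, M.V_eq_r_add_sum π hh, mul_sub, sum_sub_distrib]
  ring

lemma sum_stateOcc_mul_Vstar_sub_V (π : ℕ → S → A) {h : ℕ} (h1 : 1 ≤ h) (hH : h ≤ M.H) :
    ∑ s, M.stateOcc π h s * (M.Vstar h s - M.V π h s) =
      ∑ s, M.stateOcc π h s * M.gap h s (π h s) +
        ∑ s', M.stateOcc π (h + 1) s' * (M.Vstar (h + 1) s' - M.V π (h + 1) s') := by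
  simp only [M.Vstar_sub_V_eq_gap_add_sum π hH, M.stateOcc_succ π h1, mul_add, mul_sum,
    sum_mul, sum_add_distrib, mul_assoc]
  rw [sum_comm (γ := S)]

theorem Vstar_sub_V_eq_sum_gap (π : ℕ → S → A) :
    M.Vstar 1 M.s0 - M.V π 1 M.s0 =
      ∑ h ∈ Icc 1 M.H, ∑ s, M.stateOcc π h s * M.gap h s (π h s) := by
  have telescope : ∀ h, 1 ≤ h → h ≤ M.H + 1 → M.Vstar 1 M.s0 - M.V π 1 M.s0 =
      ∑ h' ∈ Ico 1 h, ∑ s, M.stateOcc π h' s * M.gap h' s (π h' s) +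
        ∑ s, M.stateOcc π h s * (M.Vstar h s - M.V π h s) := by
    intro h h1
    induction h, h1 using Nat.le_induction with
    | base => intro _; simp [stateOcc]
    | succ h h1 ih =>
      intro hH
      rw [ih (by omega), M.sum_stateOcc_mul_Vstar_sub_V π h1 (by omega), sum_Ico_succ_top h1,
        add_assoc]
  have hend : ∀ s, M.Vstar (M.H + 1) s - M.V π (M.H + 1) s = 0 := fun s => by
    simp [Vstar, V, VstarFuel, Vfuel]
  simp only [telescope (M.H + 1) (by omega) le_rfl, hend, mul_zero, sum_const_zero, add_zero,
    Ico_add_one_right_eq_Icc]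

lemma isOptimal_of_gap_eq_zero (π : ℕ → S → A)
    (hπ : ∀ h s, 1 ≤ h → h ≤ M.H → M.gap h s (π h s) = 0) : M.IsOptimal π := by
  have := M.Vstar_sub_V_eq_sum_gap π
  rw [sum_eq_zero fun h hh => sum_eq_zero fun s _ => by
    rw [hπ h s (mem_Icc.1 hh).1 (mem_Icc.1 hh).2, mul_zero]] at this
  exact (sub_eq_zero.1 this).symm

lemma sum_Icc_stateOcc_mul_gap_le (π : ℕ → S → A) {h : ℕ} (hH : h ≤ M.H) :
    ∑ h' ∈ Icc 1 h, ∑ s, M.stateOcc π h' s * M.gap h' s (π h' s) ≤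
      M.Vstar 1 M.s0 - M.V π 1 M.s0 := by
  rw [M.Vstar_sub_V_eq_sum_gap π]
  refine sum_le_sum_of_subset_of_nonneg (Icc_subset_Icc_right hH) fun h' hh' _ => ?_
  exact sum_nonneg fun s _ =>
    mul_nonneg (M.stateOcc_nonneg π h' s) (M.gap_nonneg (mem_Icc.1 hh').2 s _)

noncomputable def disagreeMass (π π' : ℕ → S → A) (h : ℕ) : ℝ :=
  ∑ s, if π h s = π' h s then 0 else M.stateOcc π h s

lemma disagreeMass_nonneg (π π' : ℕ → S → A) (h : ℕ) : 0 ≤ M.disagreeMass π π' h :=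
  sum_nonneg fun s _ => by split_ifs; exacts [le_rfl, M.stateOcc_nonneg π h s]

lemma stateOcc_le_disagreeMass (π π' : ℕ → S → A) {h : ℕ} {s : S} (hs : π h s ≠ π' h s) :
    M.stateOcc π h s ≤ M.disagreeMass π π' h := by
  refine le_of_eq_of_le (if_neg hs).symm (single_le_sum (f := fun s =>
    if π h s = π' h s then 0 else M.stateOcc π h s) (fun s _ => ?_) (mem_univ s))
  split_ifs; exacts [le_rfl, M.stateOcc_nonneg π h s]

lemma sum_max_stateOcc_sub_le (π π' : ℕ → S → A) {h : ℕ} (hh : 1 ≤ h) :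
    ∑ s, max (M.stateOcc π' h s - M.stateOcc π h s) 0 ≤
      ∑ h' ∈ Ico 1 h, M.disagreeMass π π' h' := by
  induction h, hh using Nat.le_induction with
  | base => simp [stateOcc]
  | succ h h1 ih =>
    set e := fun s => max (M.stateOcc π' h s - M.stateOcc π h s) 0
    set δ := fun s => if π h s = π' h s then 0 else M.stateOcc π h s
    have hstep : ∀ s s', M.stateOcc π' h s * M.P h s (π' h s) s' -
        M.stateOcc π h s * M.P h s (π h s) s' ≤ (e s + δ s) * M.P h s (π' h s) s' := by
      intro s s'
      have hP := M.P_nonneg h s (π' h s) s'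
      by_cases hs : π h s = π' h s
      · simp only [e, δ, hs, if_true, add_zero, ← sub_mul]
        exact mul_le_mul_of_nonneg_right (le_max_left _ _) hP
      · simp only [e, δ, hs, if_false]
        nlinarith [le_max_left (M.stateOcc π' h s - M.stateOcc π h s) 0,
          M.stateOcc_nonneg π h s, M.P_nonneg h s (π h s) s']
    have hnext : ∀ s', max (M.stateOcc π' (h + 1) s' - M.stateOcc π (h + 1) s') 0 ≤
        ∑ s, (e s + δ s) * M.P h s (π' h s) s' := by
      intro s'
      have hδ : ∀ s, 0 ≤ δ s := fun s => by
        simp only [δ]; split_ifs; exacts [le_rfl, M.stateOcc_nonneg π h s]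
      refine max_le ?_ (sum_nonneg fun s _ => mul_nonneg
        (add_nonneg (le_max_right _ _) (hδ s)) (M.P_nonneg _ _ _ _))
      rw [M.stateOcc_succ π h1, M.stateOcc_succ π' h1, ← sum_sub_distrib]
      exact sum_le_sum fun s _ => hstep s s'
    calc ∑ s', max (M.stateOcc π' (h + 1) s' - M.stateOcc π (h + 1) s') 0
        ≤ ∑ s', ∑ s, (e s + δ s) * M.P h s (π' h s) s' := sum_le_sum fun s' _ => hnext s'
      _ = ∑ s, e s + M.disagreeMass π π' h := by
        rw [sum_comm, disagreeMass, ← sum_add_distrib]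
        simp only [← mul_sum, M.P_sum_one, mul_one, e, δ]
      _ ≤ ∑ h' ∈ Ico 1 (h + 1), M.disagreeMass π π' h' := by
        rw [sum_Ico_succ_top h1]
        exact add_le_add_left ih _

lemma occ_le_occ_add_sum_disagreeMass (π π' : ℕ → S → A) {h : ℕ} (hh : 1 ≤ h) (s : S)
    (a : A) : M.occ π' h s a ≤ M.occ π h s a + ∑ h' ∈ Icc 1 h, M.disagreeMass π π' h' := by
  by_cases hπ' : π' h s = a
  · have hmax := (single_le_sum (fun s _ => le_max_right _ _) (mem_univ s)).trans
      (M.sum_max_stateOcc_sub_le π π' hh)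
    have := le_max_left (M.stateOcc π' h s - M.stateOcc π h s) 0
    rw [← Ico_add_one_right_eq_Icc, sum_Ico_succ_top hh]
    by_cases hπ : π h s = a
    · simp only [occ, hπ, hπ', if_true]
      linarith [M.disagreeMass_nonneg π π' h]
    · simp only [occ, hπ, hπ', if_true, if_false]
      linarith [M.stateOcc_le_disagreeMass π π' (show π h s ≠ π' h s by rwa [hπ'])]
  · rw [occ, if_neg hπ']
    linarith [M.occ_nonneg π h s a,
      sum_nonneg fun h' (_ : h' ∈ Icc 1 h) => M.disagreeMass_nonneg π π' h']

lemma mul_disagreeMass_le_sum_stateOcc_mul_gap {π π' : ℕ → S → A} {Δmin : ℝ} {h : ℕ}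
    (hH : h ≤ M.H) (hdis : ∀ s, π h s ≠ π' h s → Δmin ≤ M.gap h s (π h s)) :
    Δmin * M.disagreeMass π π' h ≤ ∑ s, M.stateOcc π h s * M.gap h s (π h s) := by
  rw [disagreeMass, mul_sum]
  refine sum_le_sum fun s _ => ?_
  split_ifs with hs
  · rw [mul_zero]
    exact mul_nonneg (M.stateOcc_nonneg π h s) (M.gap_nonneg hH s _)
  · rw [mul_comm]
    exact mul_le_mul_of_nonneg_left (hdis s hs) (M.stateOcc_nonneg π h s)

section Repair

variable [Nonempty A]

noncomputable def optAction (h : ℕ) (s : S) : A :=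
  (Finite.exists_max (M.Qstar h s)).choose

lemma gap_optAction {h : ℕ} (hh : h ≤ M.H) (s : S) : M.gap h s (M.optAction h s) = 0 := by
  refine le_antisymm ?_ (M.gap_nonneg hh s _)
  rw [gap, sub_nonpos, M.Vstar_eq_iSup_Qstar hh]
  exact ciSup_le (Finite.exists_max (M.Qstar h s)).choose_spec

/-- The policy `π*_k̃` of the paper, built from `π = π_k̃`. -/
noncomputable def repair (π : ℕ → S → A) (h : ℕ) (s : S) : A :=
  if M.gap h s (π h s) = 0 then π h s else M.optAction h s

lemma gap_repair (π : ℕ → S → A) {h : ℕ} (hh : h ≤ M.H) (s : S) :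
    M.gap h s (M.repair π h s) = 0 := by
  unfold repair
  split_ifs with hz
  exacts [hz, M.gap_optAction hh s]

lemma isOptimal_repair (π : ℕ → S → A) : M.IsOptimal (M.repair π) :=
  M.isOptimal_of_gap_eq_zero _ fun _ s _ hh => M.gap_repair π hh s

theorem occ_repair_sub_le {Δmin : ℝ} (hΔmin : 0 < Δmin)
    (hgap : ∀ h s a, 1 ≤ h → h ≤ M.H → M.gap h s a = 0 ∨ Δmin ≤ M.gap h s a)
    (π : ℕ → S → A) {h : ℕ} (h1 : 1 ≤ h) (hH : h ≤ M.H) (s : S) (a : A) :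
    M.occ (M.repair π) h s a - 1 / Δmin * (M.Vstar 1 M.s0 - M.V π 1 M.s0) ≤ M.occ π h s a := by
  have hdis : ∀ h' ∈ Icc 1 h, ∀ s, π h' s ≠ M.repair π h' s → Δmin ≤ M.gap h' s (π h' s) := by
    intro h' hh' s hs
    refine (hgap h' s _ (mem_Icc.1 hh').1 ((mem_Icc.1 hh').2.trans hH)).resolve_left ?_
    intro hz
    exact hs (if_pos hz).symm
  have hmass : Δmin * ∑ h' ∈ Icc 1 h, M.disagreeMass π (M.repair π) h' ≤
      M.Vstar 1 M.s0 - M.V π 1 M.s0 := by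
    rw [mul_sum]
    refine (sum_le_sum fun h' hh' => ?_).trans (M.sum_Icc_stateOcc_mul_gap_le π hH)
    exact M.mul_disagreeMass_le_sum_stateOcc_mul_gap ((mem_Icc.1 hh').2.trans hH) (hdis h' hh')
  have hocc := M.occ_le_occ_add_sum_disagreeMass π (M.repair π) h1 s a
  rw [one_div_mul_eq_div, sub_le_iff_le_add]
  exact hocc.trans (add_le_add_right ((le_div_iff₀' hΔmin).2 hmass) _)

end Repair

end TabMDP

theorem accumulated_occupancy_lower_bound_general
    {S A : Type} [Fintype S] [Fintype A] [Nonempty A]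
    (M : TabMDP S A) (Δmin : ℝ) (hΔmin : 0 < Δmin)
    (hgap : ∀ h s a, 1 ≤ h → h ≤ M.H → TabMDP.gap M h s a = 0 ∨ Δmin ≤ TabMDP.gap M h s a)
    (k : ℕ) (π : Fin k → ℕ → S → A) :
    ∃ πstar : Fin k → ℕ → S → A, (∀ i, TabMDP.IsOptimal M (πstar i)) ∧
      ∀ h s a, 1 ≤ h → h ≤ M.H →
        (∑ i, TabMDP.occ M (πstar i) h s a) -
            (1 / Δmin) * ∑ i, (TabMDP.Vstar M 1 M.s0 - TabMDP.V M (π i) 1 M.s0) ≤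
          ∑ i, TabMDP.occ M (π i) h s a := by
  refine ⟨fun i => M.repair (π i), fun i => M.isOptimal_repair (π i), ?_⟩
  intro h s a h1 hH
  rw [mul_sum, ← sum_sub_distrib]
  exact sum_le_sum fun i _ => M.occ_repair_sub_le hΔmin hgap (π i) h1 hH s a

/-- In a tabular MDP with minimal positive gap `Δmin`, for any sequence of deterministic
policies `π_1, …, π_k` there exists a sequence of deterministic optimal policies
`π*_1, …, π*_k` such that for all `(h, s_h, a_h)`:
`∑_{k̃} d^{π_{k̃}}(s_h,a_h) ≥ ∑_{k̃} d^{π*_{k̃}}(s_h,a_h) − (1/Δmin) ∑_{k̃} (V₁*(s₁) − V₁^{π_{k̃}}(s₁))`. -/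
theorem accumulated_occupancy_lower_bound
    {S A : Type} [Fintype S] [Nonempty S] [Fintype A] [Nonempty A]
    (M : TabMDP S A) (Δmin : ℝ) (hΔmin : 0 < Δmin)
    (hgap : ∀ h s a, 1 ≤ h → h ≤ M.H → TabMDP.gap M h s a = 0 ∨ Δmin ≤ TabMDP.gap M h s a)
    (k : ℕ) (π : Fin k → ℕ → S → A) :
    ∃ πstar : Fin k → ℕ → S → A, (∀ i, TabMDP.IsOptimal M (πstar i)) ∧
      ∀ h s a, 1 ≤ h → h ≤ M.H →
        (∑ i, TabMDP.occ M (πstar i) h s a) -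
            (1 / Δmin) * ∑ i, (TabMDP.Vstar M 1 M.s0 - TabMDP.V M (π i) 1 M.s0) ≤
          ∑ i, TabMDP.occ M (π i) h s a :=
  accumulated_occupancy_lower_bound_general M Δmin hΔmin hgap k π
end

section
/- In the unique-optimal-policy case, on the bonus-validity event, if at state s_h the PVI greedy action π^PVI_k(s_h) is not optimal, then V_h*(s_h) − V̈^{π*}_{k,h}(s_h) ≥ (1/2)(V_h*(s_h) − V̂_{k,h}(s_h)), where V̈^{π*} is the clipped value with threshold ε_Clip = Δ_min/(2H+2). -/
open Finset MeasureTheory Classical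
open scoped Classical

/-! If the greedy action of PVI at `(h, s)` has gap at least `Δmin`, pessimism gives
`V̂_h(s) ≤ V^{πg}_h(s) ≤ Q^*_h(s, πg(s)) ≤ V^*_h(s) - Δmin`. Along any policy, in particular
`π*`, each clipped surplus is at least the surplus minus `ε`; this telescopes (via `Q̂ ≤ V̂`) to
`V̈^{π*}_h(s) ≤ V̂_h(s) + (H + 1 - h) ε ≤ V̂_h(s) + Δmin / 2`, and `Δmin ≤ V^*_h(s) - V̂_h(s)`. -/

theorem Nat.backward_induction {P : ℕ → Prop} (N : ℕ) (base : ∀ h, N < h → P h)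
    (step : ∀ h ≤ N, P (h + 1) → P h) (h : ℕ) : P h := by
  induction hk : N + 1 - h generalizing h with
  | zero => exact base h (by omega)
  | succ k ih => exact step h (by omega) (ih (h + 1) (by omega))

theorem sub_le_clip {ε : ℝ} (hε : 0 ≤ ε) (x : ℝ) : x - ε ≤ clip x ε := by
  unfold clip
  split_ifs <;> linarith

namespace TabMDP

variable {S A : Type} [Fintype S] [Fintype A] (M : TabMDP S A)

theorem sum_P_mul_le_sum_P_mul (h : ℕ) (s : S) (a : A) {f g : S → ℝ}
    (hfg : ∀ s', f s' ≤ g s') :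
    ∑ s', M.P h s a s' * f s' ≤ ∑ s', M.P h s a s' * g s' :=
  sum_le_sum fun s' _ => mul_le_mul_of_nonneg_left (hfg s') (M.P_nonneg h s a s')

theorem sum_P_mul_add_const (h : ℕ) (s : S) (a : A) (f : S → ℝ) (c : ℝ) :
    ∑ s', M.P h s a s' * (f s' + c) = ∑ s', M.P h s a s' * f s' + c := by
  simp only [mul_add, sum_add_distrib, ← sum_mul, M.P_sum_one, one_mul]

section Bellman

variable {h : ℕ}

theorem V_eq_zero_of_lt (π : ℕ → S → A) (hh : M.H < h) (s : S) : V M π h s = 0 := by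
  rw [V, show M.H + 1 - h = 0 by omega, Vfuel]

theorem V_eq_of_le (π : ℕ → S → A) (hh : h ≤ M.H) (s : S) :
    V M π h s = M.r h s (π h s) + ∑ s', M.P h s (π h s) s' * V M π (h + 1) s' := by
  rw [V, show M.H + 1 - h = (M.H + 1 - (h + 1)) + 1 by omega, Vfuel]
  rfl

theorem Vhat_eq_zero_of_lt (Phat : ℕ → S → A → S → ℝ) (b : ℕ → S → A → ℝ) (hh : M.H < h)
    (s : S) :
    Vhat M Phat b h s = 0 := by
  rw [Vhat, show M.H + 1 - h = 0 by omega, VhatFuel]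

theorem Vhat_eq_of_le (Phat : ℕ → S → A → S → ℝ) (b : ℕ → S → A → ℝ) (hh : h ≤ M.H)
    (s : S) :
    Vhat M Phat b h s = ⨆ a, Qhat M Phat b h s a := by
  rw [Vhat, show M.H + 1 - h = (M.H + 1 - (h + 1)) + 1 by omega, VhatFuel]
  rfl

theorem Vclip_eq_zero_of_lt (π : ℕ → S → A) (E : ℕ → S → A → ℝ) (hh : M.H < h) (s : S) :
    Vclip M π E h s = 0 := by
  rw [Vclip, show M.H + 1 - h = 0 by omega, VclipFuel]

theorem Vclip_eq_of_le (π : ℕ → S → A) (E : ℕ → S → A → ℝ) (hh : h ≤ M.H) (s : S) :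
    Vclip M π E h s =
      (M.r h s (π h s) - E h s (π h s)) + ∑ s', M.P h s (π h s) s' * Vclip M π E (h + 1) s' := by
  rw [Vclip, show M.H + 1 - h = (M.H + 1 - (h + 1)) + 1 by omega, VclipFuel]
  rfl

end Bellman

theorem Vfuel_nonneg (π : ℕ → S → A) (n h : ℕ) (s : S) : 0 ≤ Vfuel M π n h s := by
  induction n generalizing h s with
  | zero => exact le_rfl
  | succ n ih =>
    exact add_nonneg (M.r_nonneg _ _ _)
      (sum_nonneg fun s' _ => mul_nonneg (M.P_nonneg _ _ _ _) (ih _ _))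

theorem V_nonneg (π : ℕ → S → A) (h : ℕ) (s : S) : 0 ≤ V M π h s :=
  M.Vfuel_nonneg π _ h s

theorem Vfuel_le_VstarFuel (π : ℕ → S → A) (n h : ℕ) (s : S) :
    Vfuel M π n h s ≤ VstarFuel M n h s := by
  induction n generalizing h s with
  | zero => exact le_rfl
  | succ n ih =>
    calc Vfuel M π (n + 1) h s
        ≤ M.r h s (π h s) + ∑ s', M.P h s (π h s) s' * VstarFuel M n (h + 1) s' :=
          add_le_add_right (M.sum_P_mul_le_sum_P_mul h s (π h s) fun s' => ih _ s') _
      _ ≤ VstarFuel M (n + 1) h s :=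
          le_ciSup (f := fun a => M.r h s a + ∑ s', M.P h s a s' * VstarFuel M n (h + 1) s')
            (Set.finite_range _).bddAbove (π h s)

theorem V_le_Vstar (π : ℕ → S → A) (h : ℕ) (s : S) : V M π h s ≤ Vstar M h s :=
  M.Vfuel_le_VstarFuel π _ h s

theorem V_le_Qstar (π : ℕ → S → A) {h : ℕ} (hh : h ≤ M.H) (s : S) :
    V M π h s ≤ Qstar M h s (π h s) := by
  rw [M.V_eq_of_le π hh, Qstar]
  exact add_le_add_right
    (M.sum_P_mul_le_sum_P_mul h s (π h s) fun s' => M.V_le_Vstar π (h + 1) s') _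

section PVI

variable (Phat : ℕ → S → A → S → ℝ) (b : ℕ → S → A → ℝ)

theorem Qhat_le_Vhat {h : ℕ} (hh : h ≤ M.H) (s : S) (a : A) :
    Qhat M Phat b h s a ≤ Vhat M Phat b h s := by
  rw [M.Vhat_eq_of_le Phat b hh]
  exact le_ciSup (Set.finite_range _).bddAbove a

theorem Vhat_le_V_of_greedy (πg : ℕ → S → A)
    (hgreedy : ∀ h s, Vhat M Phat b h s = Qhat M Phat b h s (πg h s))
    (hbonus : ∀ h s a, 1 ≤ h → h ≤ M.H →
      ∑ s', Phat h s a s' * Vhat M Phat b (h + 1) s' - b h s a ≤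
        ∑ s', M.P h s a s' * Vhat M Phat b (h + 1) s')
    {h : ℕ} (hh : 1 ≤ h) (s : S) : Vhat M Phat b h s ≤ V M πg h s := by
  induction h using Nat.backward_induction M.H generalizing s with
  | base h hlt => rw [M.Vhat_eq_zero_of_lt Phat b hlt, M.V_eq_zero_of_lt πg hlt]
  | step h hle ih =>
    have hnext : ∑ s', M.P h s (πg h s) s' * Vhat M Phat b (h + 1) s' ≤
        ∑ s', M.P h s (πg h s) s' * V M πg (h + 1) s' :=
      M.sum_P_mul_le_sum_P_mul h s _ fun s' => ih (by omega) s'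
    rw [hgreedy, Qhat]
    refine max_le ?_ (M.V_nonneg πg h s)
    rw [M.V_eq_of_le πg hle]
    linarith [hbonus h s (πg h s) hh hle]

theorem Vclip_le_Vhat_add (π : ℕ → S → A) {ε : ℝ} (hε : 0 ≤ ε) (h : ℕ) (s : S) :
    Vclip M π (fun h' s' a' => clip (surplus M Phat b h' s' a') ε) h s ≤
      Vhat M Phat b h s + (M.H + 1 - h : ℕ) * ε := by
  induction h using Nat.backward_induction M.H generalizing s with
  | base h hlt =>
    rw [M.Vclip_eq_zero_of_lt π _ hlt, M.Vhat_eq_zero_of_lt Phat b hlt,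
      show M.H + 1 - h = 0 by omega]
    simp
  | step h hle ih =>
    have hnext := M.sum_P_mul_le_sum_P_mul h s (π h s) fun s' => ih s'
    rw [sum_P_mul_add_const] at hnext
    have hcount : ((M.H + 1 - h : ℕ) : ℝ) = (M.H + 1 - (h + 1) : ℕ) + 1 := by
      rw [show M.H + 1 - h = (M.H + 1 - (h + 1)) + 1 by omega]
      push_cast
      ring
    have hsurplus : surplus M Phat b h s (π h s) = M.r h s (π h s) +
        ∑ s', M.P h s (π h s) s' * Vhat M Phat b (h + 1) s' - Qhat M Phat b h s (π h s) := rfl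
    rw [M.Vclip_eq_of_le π _ hle, hcount]
    linarith [sub_le_clip hε (surplus M Phat b h s (π h s)),
      M.Qhat_le_Vhat Phat b hle s (π h s)]

end PVI

end TabMDP

theorem pvi_unique_opt_one_step_general
    {S A : Type} [Fintype S] [Fintype A]
    (M : TabMDP S A) (Phat : ℕ → S → A → S → ℝ) (b : ℕ → S → A → ℝ)
    (πg : ℕ → S → A)
    (hgreedy : ∀ h s, TabMDP.Vhat M Phat b h s = TabMDP.Qhat M Phat b h s (πg h s))
    (Δmin : ℝ) (hΔmin : 0 < Δmin)
    (hgap : ∀ h s a, 1 ≤ h → h ≤ M.H → TabMDP.gap M h s a = 0 ∨ Δmin ≤ TabMDP.gap M h s a)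
    (hevent : ∀ h s a, 1 ≤ h → h ≤ M.H →
      |(∑ s', Phat h s a s' * TabMDP.Vhat M Phat b (h + 1) s') -
          ∑ s', M.P h s a s' * TabMDP.Vhat M Phat b (h + 1) s'| < b h s a)
    (πst : ℕ → S → A)
    (h : ℕ) (s : S) (hh1 : 1 ≤ h) (hhH : h ≤ M.H)
    (hsubopt : TabMDP.gap M h s (πg h s) ≠ 0) :
    (1 / 2) * (TabMDP.Vstar M h s - TabMDP.Vhat M Phat b h s) ≤
      TabMDP.Vstar M h s -
        TabMDP.Vclip M πst
          (fun h' s' a' =>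
            clip (TabMDP.surplus M Phat b h' s' a') (Δmin / (2 * (M.H : ℝ) + 2))) h s := by
  have hε : 0 ≤ Δmin / (2 * (M.H : ℝ) + 2) := by positivity
  have hpess : TabMDP.Vhat M Phat b h s ≤ TabMDP.V M πg h s :=
    M.Vhat_le_V_of_greedy Phat b πg hgreedy
      (fun h' s' a' h1 hH => by linarith [(abs_lt.mp (hevent h' s' a' h1 hH)).2]) hh1 s
  have hgap_ge : Δmin ≤ TabMDP.gap M h s (πg h s) :=
    (hgap h s (πg h s) hh1 hhH).resolve_left hsubopt
  have hclip := M.Vclip_le_Vhat_add Phat b πst hε h s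
  have hsteps : ((M.H + 1 - h : ℕ) : ℝ) * (Δmin / (2 * (M.H : ℝ) + 2)) ≤ Δmin / 2 := by
    calc ((M.H + 1 - h : ℕ) : ℝ) * (Δmin / (2 * (M.H : ℝ) + 2))
        ≤ ((M.H : ℝ) + 1) * (Δmin / (2 * (M.H : ℝ) + 2)) := by
          gcongr; exact_mod_cast Nat.sub_le _ _
      _ = Δmin / 2 := by field_simp
  have hgap_def : TabMDP.gap M h s (πg h s) =
      TabMDP.Vstar M h s - TabMDP.Qstar M h s (πg h s) := rfl
  linarith [M.V_le_Qstar πg hhH s]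

/-- Unique-optimal-policy case: on the bonus-validity event, if at `(h, s_h)` the PVI greedy
action is not optimal, then with clipping threshold `ε_Clip = Δmin/(2H+2)`:
`V_h^*(s_h) − V̈^{π*}_h(s_h) ≥ (1/2)(V_h^*(s_h) − V̂_h(s_h))`. -/
theorem pvi_unique_opt_one_step
    {S A : Type} [Fintype S] [Nonempty S] [Fintype A] [Nonempty A]
    (M : TabMDP S A) (Phat : ℕ → S → A → S → ℝ) (b : ℕ → S → A → ℝ)
    (πg : ℕ → S → A)
    (hgreedy : ∀ h s, TabMDP.Vhat M Phat b h s = TabMDP.Qhat M Phat b h s (πg h s))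
    (Δmin : ℝ) (hΔmin : 0 < Δmin)
    (hgap : ∀ h s a, 1 ≤ h → h ≤ M.H → TabMDP.gap M h s a = 0 ∨ Δmin ≤ TabMDP.gap M h s a)
    (hevent : ∀ h s a, 1 ≤ h → h ≤ M.H →
      |(∑ s', Phat h s a s' * TabMDP.Vhat M Phat b (h + 1) s') -
          ∑ s', M.P h s a s' * TabMDP.Vhat M Phat b (h + 1) s'| < b h s a)
    (πst : ℕ → S → A) (hopt : ∀ h s, TabMDP.V M πst h s = TabMDP.Vstar M h s)
    (huniq : ∀ π' : ℕ → S → A, TabMDP.IsOptimal M π' →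
      ∀ h s a, TabMDP.occ M π' h s a = TabMDP.occ M πst h s a)
    (h : ℕ) (s : S) (hh1 : 1 ≤ h) (hhH : h ≤ M.H)
    (hsubopt : TabMDP.gap M h s (πg h s) ≠ 0) :
    (1 / 2) * (TabMDP.Vstar M h s - TabMDP.Vhat M Phat b h s) ≤
      TabMDP.Vstar M h s -
        TabMDP.Vclip M πst
          (fun h' s' a' =>
            clip (TabMDP.surplus M Phat b h' s' a') (Δmin / (2 * (M.H : ℝ) + 2))) h s :=
  pvi_unique_opt_one_step_general M Phat b πg hgreedy Δmin hΔmin hgap hevent πst h s hh1 hhH hsubopt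
end
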